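/- arXiv:2311.01938 — 3 statements merged into one kernel-verified Lean document; each statement's English description precedes it below -/
import Mathlib

section
/- Let χ ∈ 𝒫_{0,rK̃} (a function of the angles Q only) and f ∈ 𝒫_{l,sK̃} for nonnegative integers l, s, r. Then for every integer j with 1 ≤ j ≤ l, the iterated Lie derivative L_χ^j f belongs to 𝒫_{l−j,(s+jr)K̃}; moreover L_χ^j f = 0 for every j > l. -/
open Complex

noncomputable section

/-- Partial derivative of `f(P,Q)` with respect to the action variable `P i`. -/
def pderivP {n : ℕ} (f : (Fin n → ℝ) × (Fin n → ℝ) → ℝ) (i : Fin n) :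
    (Fin n → ℝ) × (Fin n → ℝ) → ℝ :=
  fun x => deriv (fun t => f (Function.update x.1 i t, x.2)) (x.1 i)

/-- Partial derivative of `f(P,Q)` with respect to the angle variable `Q i`. -/
def pderivQ {n : ℕ} (f : (Fin n → ℝ) × (Fin n → ℝ) → ℝ) (i : Fin n) :
    (Fin n → ℝ) × (Fin n → ℝ) → ℝ :=
  fun x => deriv (fun t => f (x.1, Function.update x.2 i t)) (x.2 i)

/-- Poisson bracket `{f,g} = Σ_i (∂f/∂Q_i ∂g/∂P_i − ∂f/∂P_i ∂g/∂Q_i)`. -/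
def poissonBracket {n : ℕ} (f g : (Fin n → ℝ) × (Fin n → ℝ) → ℝ) :
    (Fin n → ℝ) × (Fin n → ℝ) → ℝ :=
  fun x => ∑ i, (pderivQ f i x * pderivP g i x - pderivP f i x * pderivQ g i x)

/-- The class `𝒫_{l,d}` of real-valued functions
`f(P,Q) = Σ_{|j|₁ = l} Σ_{|k|₁ ≤ d} c_{j,k} P^j e^{i k·Q}`, with `c_{j,-k} = conj (c_{j,k})`. -/
def PClass (n l d : ℕ) : Set ((Fin n → ℝ) × (Fin n → ℝ) → ℝ) :=
  { f | ∃ c : (Fin n → ℕ) → (Fin n → ℤ) → ℂ,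
      (∀ j k, (∑ i, j i) ≠ l → c j k = 0) ∧
      (∀ j k, (d : ℤ) < ∑ i, |k i| → c j k = 0) ∧
      (∀ j k, c j (-k) = (starRingEnd ℂ) (c j k)) ∧
      (∀ P Q : Fin n → ℝ, (f (P, Q) : ℂ) =
        ∑ᶠ (j : Fin n → ℕ) (k : Fin n → ℤ),
          c j k * (∏ i, (P i : ℂ) ^ (j i)) *
            Complex.exp (Complex.I * ∑ i, (k i : ℂ) * (Q i : ℂ))) }


/-
Complexify: a real `f` lies in `𝒫_{l,d}` iff `↑f` lies in the complex span of the monomials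
`P^j e^{i k·Q}` with `|j|₁ = l`, `|k|₁ ≤ d`; the symmetry `c_{j,-k} = conj c_{j,k}` can always be
restored by averaging, because `f` is real. On this span `∂/∂P_i` lowers the degree by one,
`∂/∂Q_i` preserves it, and products add degrees and frequency bounds. Since `χ` does not depend
on `P`, `{f, χ} = -Σ_i ∂f/∂P_i · ∂χ/∂Q_i`, so each Lie derivative lowers `l` by one and raises the
frequency bound by that of `χ`; at degree `0` the next bracket vanishes, and `L_χ 0 = 0`.
-/

open Finset Submodule ComplexConjugate

theorem Submodule.exists_hasDerivAt_of_mem_span {X : Type*} (γ : X → ℝ → X) (τ : X → ℝ)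
    {S : Set (X → ℂ)} {M : Submodule ℂ (X → ℂ)}
    (hS : ∀ s ∈ S, ∃ s' ∈ M, ∀ x, HasDerivAt (fun t => s (γ x t)) (s' x) (τ x))
    {g : X → ℂ} (hg : g ∈ span ℂ S) :
    ∃ g' ∈ M, ∀ x, HasDerivAt (fun t => g (γ x t)) (g' x) (τ x) := by
  induction hg using span_induction with
  | mem s hs => exact hS s hs
  | zero => exact ⟨0, M.zero_mem, fun x => hasDerivAt_const (τ x) (0 : ℂ)⟩
  | add g₁ g₂ _ _ h₁ h₂ =>
    obtain ⟨g₁', hg₁', hd₁⟩ := h₁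
    obtain ⟨g₂', hg₂', hd₂⟩ := h₂
    exact ⟨g₁' + g₂', M.add_mem hg₁' hg₂', fun x => (hd₁ x).add (hd₂ x)⟩
  | smul a g _ h =>
    obtain ⟨g', hg', hd⟩ := h
    exact ⟨a • g', M.smul_mem a hg', fun x => (hd x).const_mul a⟩

theorem ofReal_deriv_eq_of_hasDerivAt {f : ℝ → ℝ} {f' : ℂ} {x : ℝ}
    (h : HasDerivAt (fun t => (f t : ℂ)) f' x) : ((deriv f x : ℝ) : ℂ) = f' := by
  have hre : HasDerivAt f f'.re x := by
    simpa [Function.comp_def] using (reCLM.hasFDerivAt (x := (f x : ℂ))).comp_hasDerivAt x h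
  rw [hre.deriv, h.unique hre.ofReal_comp, ofReal_re]

theorem ofReal_comp_deriv_mem_of_mem_span {X : Type*} (γ : X → ℝ → X) (τ : X → ℝ)
    {S : Set (X → ℂ)} {M : Submodule ℂ (X → ℂ)}
    (hS : ∀ s ∈ S, ∃ s' ∈ M, ∀ x, HasDerivAt (fun t => s (γ x t)) (s' x) (τ x))
    {f : X → ℝ} (hf : ofReal ∘ f ∈ span ℂ S) :
    ofReal ∘ (fun x => deriv (fun t => f (γ x t)) (τ x)) ∈ M := by
  obtain ⟨g', hg', hd⟩ := Submodule.exists_hasDerivAt_of_mem_span γ τ hS hf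
  convert hg'
  funext x
  exact ofReal_deriv_eq_of_hasDerivAt (hd x)

namespace PClass

variable {n : ℕ}

def monomial (j : Fin n → ℕ) (k : Fin n → ℤ) : (Fin n → ℝ) × (Fin n → ℝ) → ℂ :=
  fun x => (∏ i, (x.1 i : ℂ) ^ j i) * exp (I * ∑ i, (k i : ℂ) * (x.2 i : ℂ))

def monomialIndex (n l d : ℕ) : Finset ((Fin n → ℕ) × (Fin n → ℤ)) :=
  (Nat.antidiagonalTuple n l ×ˢ Fintype.piFinset fun _ => Icc (-(d : ℤ)) d).filter
    fun p => ∑ i, |p.2 i| ≤ d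

theorem mem_monomialIndex {l d : ℕ} {p : (Fin n → ℕ) × (Fin n → ℤ)} :
    p ∈ monomialIndex n l d ↔ ∑ i, p.1 i = l ∧ ∑ i, |p.2 i| ≤ (d : ℤ) := by
  simp only [monomialIndex, mem_filter, mem_product, Nat.mem_antidiagonalTuple,
    Fintype.mem_piFinset, mem_Icc, ← abs_le, and_congr_left_iff, and_iff_left_iff_imp]
  intro hk _ i
  exact (single_le_sum (fun i _ => abs_nonneg (p.2 i)) (mem_univ i)).trans hk

def monomialSpan (n l d : ℕ) : Submodule ℂ ((Fin n → ℝ) × (Fin n → ℝ) → ℂ) :=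
  span ℂ ((fun p : (Fin n → ℕ) × (Fin n → ℤ) => monomial p.1 p.2) '' monomialIndex n l d)

theorem monomial_mul (j j' : Fin n → ℕ) (k k' : Fin n → ℤ) :
    monomial j k * monomial j' k' = monomial (j + j') (k + k') := by
  funext x
  simp only [monomial, Pi.mul_apply, Pi.add_apply, pow_add, prod_mul_distrib, Int.cast_add,
    add_mul, sum_add_distrib, mul_add, Complex.exp_add]
  ring

theorem conj_monomial (j : Fin n → ℕ) (k : Fin n → ℤ) (x : (Fin n → ℝ) × (Fin n → ℝ)) :
    conj (monomial j k x) = monomial j (-k) x := by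
  simp [monomial, ← Complex.exp_conj, map_prod, map_sum]

theorem mul_mem_monomialSpan {l l' d d' : ℕ} {g g' : (Fin n → ℝ) × (Fin n → ℝ) → ℂ}
    (hg : g ∈ monomialSpan n l d) (hg' : g' ∈ monomialSpan n l' d') :
    g * g' ∈ monomialSpan n (l + l') (d + d') := by
  have hle : monomialSpan n l d * monomialSpan n l' d' ≤
      monomialSpan n (l + l') (d + d') := by
    rw [monomialSpan, monomialSpan, monomialSpan, span_mul_span]
    refine span_mono (Set.mul_subset_iff.2 ?_)
    rintro _ ⟨p, hp, rfl⟩ _ ⟨p', hp', rfl⟩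
    rw [mem_coe, mem_monomialIndex] at hp hp'
    refine ⟨p + p', mem_monomialIndex.2 ⟨?_, ?_⟩, (monomial_mul _ _ _ _).symm⟩
    · simp [sum_add_distrib, hp.1, hp'.1]
    · calc ∑ i, |(p + p').2 i| ≤ ∑ i, (|p.2 i| + |p'.2 i|) :=
            sum_le_sum fun i _ => abs_add_le _ _
        _ ≤ d + d' := by rw [sum_add_distrib]; exact add_le_add hp.2 hp'.2
  exact hle (mul_mem_mul hg hg')

theorem hasDerivAt_monomial_action (j : Fin n → ℕ) (k : Fin n → ℤ)
    (x : (Fin n → ℝ) × (Fin n → ℝ)) (i : Fin n) :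
    HasDerivAt (fun t => monomial j k (Function.update x.1 i t, x.2))
      ((j i : ℂ) * monomial (Function.update j i (j i - 1)) k x) (x.1 i) := by
  have hprod (t : ℝ) (m : ℕ) :
      ∏ i', (Function.update x.1 i t i' : ℂ) ^ Function.update j i m i' =
        (t : ℂ) ^ m * ∏ i' ∈ univ \ {i}, (x.1 i' : ℂ) ^ j i' := by
    rw [← prod_update_of_mem (mem_univ i)]
    exact prod_congr rfl fun i' _ => by
      rw [Function.apply_update₂ (fun i' (a : ℝ) (e : ℕ) => (a : ℂ) ^ e)]
  have hpow : HasDerivAt (fun t : ℝ => (t : ℂ) ^ j i)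
      ((j i : ℂ) * (x.1 i : ℂ) ^ (j i - 1)) (x.1 i) :=
    (hasDerivAt_pow (j i) (x.1 i : ℂ)).comp_ofReal
  have hfun : (fun t => monomial j k (Function.update x.1 i t, x.2)) = fun t : ℝ =>
      (t : ℂ) ^ j i * (∏ i' ∈ univ \ {i}, (x.1 i' : ℂ) ^ j i') *
        exp (I * ∑ i', (k i' : ℂ) * (x.2 i' : ℂ)) := by
    funext t
    simpa [monomial] using
      congrArg (· * exp (I * ∑ i', (k i' : ℂ) * (x.2 i' : ℂ))) (hprod t (j i))
  rw [hfun]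
  refine ((hpow.mul_const _).mul_const _).congr_deriv ?_
  have := hprod (x.1 i) (j i - 1)
  rw [Function.update_eq_self] at this
  simp only [monomial, this]
  ring

theorem hasDerivAt_monomial_angle (j : Fin n → ℕ) (k : Fin n → ℤ)
    (x : (Fin n → ℝ) × (Fin n → ℝ)) (i : Fin n) :
    HasDerivAt (fun t => monomial j k (x.1, Function.update x.2 i t))
      (I * k i * monomial j k x) (x.2 i) := by
  have hsum (t : ℝ) : ∑ i', (k i' : ℂ) * (Function.update x.2 i t i' : ℂ) =
      k i * t + ∑ i' ∈ univ \ {i}, (k i' : ℂ) * (x.2 i' : ℂ) := by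
    rw [← sum_update_of_mem (mem_univ i)]
    exact sum_congr rfl fun i' _ => by
      rw [Function.apply_update (fun i' (a : ℝ) => (k i' : ℂ) * a)]
  have hlin : HasDerivAt
      (fun t : ℝ => I * (k i * t + ∑ i' ∈ univ \ {i}, (k i' : ℂ) * (x.2 i' : ℂ)))
      (I * k i) (x.2 i) := by
    simpa using
      (((hasDerivAt_id (x.2 i)).ofReal_comp.const_mul (k i : ℂ)).add_const _).const_mul I
  have hfun : (fun t => monomial j k (x.1, Function.update x.2 i t)) = fun t : ℝ =>
      (∏ i', (x.1 i' : ℂ) ^ j i') *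
        exp (I * (k i * t + ∑ i' ∈ univ \ {i}, (k i' : ℂ) * (x.2 i' : ℂ))) := by
    funext t
    simp only [monomial, hsum]
  rw [hfun]
  refine (hlin.cexp.const_mul _).congr_deriv ?_
  simp only [monomial, ← hsum, Function.update_eq_self]
  ring

theorem neg_mem_monomialIndex {l d : ℕ} {j : Fin n → ℕ} {k : Fin n → ℤ} :
    (j, -k) ∈ monomialIndex n l d ↔ (j, k) ∈ monomialIndex n l d := by
  simp [mem_monomialIndex]

theorem finsum_eq_sum_monomialIndex {l d : ℕ} {c : (Fin n → ℕ) → (Fin n → ℤ) → ℂ}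
    (hc : ∀ j k, c j k ≠ 0 → (j, k) ∈ monomialIndex n l d) (P Q : Fin n → ℝ) :
    ∑ᶠ (j : Fin n → ℕ) (k : Fin n → ℤ),
        c j k * (∏ i, (P i : ℂ) ^ (j i)) * exp (I * ∑ i, (k i : ℂ) * (Q i : ℂ)) =
      ∑ p ∈ monomialIndex n l d, c p.1 p.2 * monomial p.1 p.2 (P, Q) := by
  have hsupp : Function.support (fun p : (Fin n → ℕ) × (Fin n → ℤ) =>
      c p.1 p.2 * monomial p.1 p.2 (P, Q)) ⊆ monomialIndex n l d :=
    fun p hp => hc p.1 p.2 (left_ne_zero_of_mul hp)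
  rw [← finsum_eq_sum_of_support_subset _ hsupp,
    finsum_curry _ ((monomialIndex n l d).finite_toSet.subset hsupp)]
  simp only [monomial, mul_assoc]

theorem mem_iff_ofReal_comp_mem_monomialSpan {l d : ℕ}
    {f : (Fin n → ℝ) × (Fin n → ℝ) → ℝ} :
    f ∈ PClass n l d ↔ ofReal ∘ f ∈ monomialSpan n l d := by
  constructor
  · rintro ⟨c, hdeg, hfreq, -, hrep⟩
    have hc : ∀ j k, c j k ≠ 0 → (j, k) ∈ monomialIndex n l d := fun j k h =>
      mem_monomialIndex.2 ⟨not_imp_comm.1 (hdeg j k) h, not_lt.1 (mt (hfreq j k) h)⟩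
    have hsum : ofReal ∘ f = ∑ p ∈ monomialIndex n l d, c p.1 p.2 • monomial p.1 p.2 := by
      funext x
      simp [hrep, finsum_eq_sum_monomialIndex hc]
    rw [hsum]
    exact sum_mem fun p hp => smul_mem _ _ (subset_span ⟨p, hp, rfl⟩)
  · intro hf
    obtain ⟨c, hcI, hc⟩ := (Finsupp.mem_span_image_iff_linearCombination ℂ).1 hf
    rw [Finsupp.linearCombination_apply_of_mem_supported ℂ hcI] at hc
    have hI : ∀ j k, c (j, k) ≠ 0 → (j, k) ∈ monomialIndex n l d :=
      fun j k h => hcI (Finsupp.mem_support_iff.2 h)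
    set c' : (Fin n → ℕ) → (Fin n → ℤ) → ℂ := fun j k => (c (j, k) + conj (c (j, -k))) / 2
    have hc' : ∀ j k, (j, k) ∉ monomialIndex n l d → c' j k = 0 := fun j k h => by
      have hneg := neg_mem_monomialIndex.not.2 h
      simp only [c', not_imp_comm.1 (hI j k) h, not_imp_comm.1 (hI j (-k)) hneg, map_zero,
        add_zero, zero_div]
    refine ⟨c', fun j k hj => hc' j k fun h => hj (mem_monomialIndex.1 h).1,
      fun j k hk => hc' j k fun h => (mem_monomialIndex.1 h).2.not_gt hk, fun j k => ?_,
      fun P Q => ?_⟩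
    · simp only [c', neg_neg, map_div₀, map_add, conj_conj, map_ofNat]
      ring
    have hsum : ∑ p ∈ monomialIndex n l d, c p * monomial p.1 p.2 (P, Q) = f (P, Q) := by
      simpa using congrFun hc (P, Q)
    -- `f` is real, so reflecting the frequencies and conjugating the coefficients changes nothing.
    have hsum_refl : ∑ p ∈ monomialIndex n l d,
        conj (c (p.1, -p.2)) * monomial p.1 p.2 (P, Q) = f (P, Q) :=
      calc _ = ∑ p ∈ monomialIndex n l d, conj (c p * monomial p.1 p.2 (P, Q)) :=
            sum_equiv ((Equiv.refl _).prodCongr (Equiv.neg _))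
              (fun p => neg_mem_monomialIndex.symm) (fun p _ => by simp [conj_monomial, Prod.map])
        _ = f (P, Q) := by rw [← map_sum, hsum, conj_ofReal]
    rw [finsum_eq_sum_monomialIndex (fun j k => not_imp_comm.1 (hc' j k)) P Q]
    simp only [c', add_div, add_mul, sum_add_distrib, div_mul_eq_mul_div, ← sum_div, hsum_refl]
    rw [hsum]
    ring

variable {l d : ℕ} {f : (Fin n → ℝ) × (Fin n → ℝ) → ℝ}

theorem pderivP_mem (hf : f ∈ PClass n (l + 1) d) (i : Fin n) : pderivP f i ∈ PClass n l d := by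
  rw [mem_iff_ofReal_comp_mem_monomialSpan] at hf ⊢
  refine ofReal_comp_deriv_mem_of_mem_span (fun x t => (Function.update x.1 i t, x.2))
    (fun x => x.1 i) ?_ hf
  rintro _ ⟨⟨j, k⟩, hjk, rfl⟩
  refine ⟨(j i : ℂ) • monomial (Function.update j i (j i - 1)) k, ?_,
    (hasDerivAt_monomial_action j k · i)⟩
  obtain ⟨hj, hk⟩ := mem_monomialIndex.1 hjk
  rcases eq_or_ne (j i) 0 with hji | hji
  · simp [hji]
  refine smul_mem _ _
    (subset_span ⟨(Function.update j i (j i - 1), k), mem_monomialIndex.2 ⟨?_, hk⟩, rfl⟩)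
  have hsplit := add_sum_erase univ j (mem_univ i)
  rw [sum_update_of_mem (mem_univ i), sdiff_singleton_eq_erase]
  simp only at hj
  omega

theorem pderivP_eq_zero (hf : f ∈ PClass n 0 d) (i : Fin n) : pderivP f i = 0 := by
  rw [mem_iff_ofReal_comp_mem_monomialSpan] at hf
  have h := ofReal_comp_deriv_mem_of_mem_span (M := ⊥)
    (fun x t => (Function.update x.1 i t, x.2)) (fun x => x.1 i) ?_ hf
  · funext x
    simpa [pderivP] using congrFun ((mem_bot ℂ).1 h) x
  rintro _ ⟨⟨j, k⟩, hjk, rfl⟩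
  have hji : j i = 0 := sum_eq_zero_iff.1 (mem_monomialIndex.1 hjk).1 i (mem_univ i)
  exact ⟨0, zero_mem _, fun x => by simpa [hji] using hasDerivAt_monomial_action j k x i⟩

theorem pderivQ_mem (hf : f ∈ PClass n l d) (i : Fin n) : pderivQ f i ∈ PClass n l d := by
  rw [mem_iff_ofReal_comp_mem_monomialSpan] at hf ⊢
  refine ofReal_comp_deriv_mem_of_mem_span (fun x t => (x.1, Function.update x.2 i t))
    (fun x => x.2 i) ?_ hf
  rintro _ ⟨⟨j, k⟩, hjk, rfl⟩
  exact ⟨(I * k i) • monomial j k, smul_mem _ _ (subset_span ⟨_, hjk, rfl⟩),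
    (hasDerivAt_monomial_angle j k · i)⟩

theorem poissonBracket_zero_left (χ : (Fin n → ℝ) × (Fin n → ℝ) → ℝ) :
    poissonBracket 0 χ = 0 := by
  funext x
  simp [poissonBracket, pderivP, pderivQ]

variable {e : ℕ} {χ : (Fin n → ℝ) × (Fin n → ℝ) → ℝ}

theorem poissonBracket_mem
    (hf : f ∈ PClass n (l + 1) d) (hχ : χ ∈ PClass n 0 e) :
    poissonBracket f χ ∈ PClass n l (d + e) := by
  have hbracket : ofReal ∘ poissonBracket f χ =
      ∑ i, -((ofReal ∘ pderivP f i) * (ofReal ∘ pderivQ χ i)) := by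
    funext x
    simp [poissonBracket, pderivP_eq_zero hχ]
  rw [mem_iff_ofReal_comp_mem_monomialSpan, hbracket]
  refine sum_mem fun i _ => neg_mem ?_
  simpa using mul_mem_monomialSpan (mem_iff_ofReal_comp_mem_monomialSpan.1 (pderivP_mem hf i))
    (mem_iff_ofReal_comp_mem_monomialSpan.1 (pderivQ_mem hχ i))

theorem poissonBracket_eq_zero
    (hf : f ∈ PClass n 0 d) (hχ : χ ∈ PClass n 0 e) : poissonBracket f χ = 0 := by
  funext x
  simp [poissonBracket, pderivP_eq_zero hf, pderivP_eq_zero hχ]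

theorem iterate_poissonBracket_mem (hχ : χ ∈ PClass n 0 e) (hf : f ∈ PClass n l d) :
    ∀ j ≤ l, (fun g => poissonBracket g χ)^[j] f ∈ PClass n (l - j) (d + j * e)
  | 0, _ => by simpa using hf
  | j + 1, hj => by
    have h := iterate_poissonBracket_mem hχ hf j (by omega)
    rw [show l - j = l - (j + 1) + 1 by omega] at h
    rw [Function.iterate_succ_apply', add_one_mul, ← add_assoc]
    exact poissonBracket_mem h hχ

theorem iterate_poissonBracket_eq_zero (hχ : χ ∈ PClass n 0 e) (hf : f ∈ PClass n l d)
    {j : ℕ} (hj : l < j) : (fun g => poissonBracket g χ)^[j] f = 0 := by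
  obtain ⟨m, rfl⟩ := Nat.exists_eq_add_of_lt hj
  have hl : (fun g => poissonBracket g χ)^[l] f ∈ PClass n 0 (d + l * e) := by
    simpa using iterate_poissonBracket_mem hχ hf l le_rfl
  rw [add_right_comm, add_comm, Function.iterate_add_apply, Function.iterate_succ_apply',
    poissonBracket_eq_zero hl hχ]
  exact Function.iterate_fixed (poissonBracket_zero_left χ) m

end PClass

theorem lieDeriv_iter_mem_PClass_of_deg_zero_general
    (n Ktil : ℕ) (l s r : ℕ)
    (χ f : (Fin n → ℝ) × (Fin n → ℝ) → ℝ)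
    (hχ : χ ∈ PClass n 0 (r * Ktil)) (hf : f ∈ PClass n l (s * Ktil)) :
    (∀ j : ℕ, 1 ≤ j → j ≤ l →
      ((fun g => poissonBracket g χ)^[j]) f ∈ PClass n (l - j) ((s + j * r) * Ktil)) ∧
    (∀ j : ℕ, l < j → ((fun g => poissonBracket g χ)^[j]) f = 0) := by
  refine ⟨fun j _ hj => ?_, fun j hj => PClass.iterate_poissonBracket_eq_zero hχ hf hj⟩
  rw [add_mul, mul_assoc]
  exact PClass.iterate_poissonBracket_mem hχ hf j hj

/-- If `χ ∈ 𝒫_{0,rK̃}` (a function of the angles only) and `f ∈ 𝒫_{l,sK̃}`,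
then for every `1 ≤ j ≤ l` the iterated Lie derivative `L_χ^j f` belongs to
`𝒫_{l−j,(s+jr)K̃}`, and `L_χ^j f = 0` for every `j > l`. -/
theorem lieDeriv_iter_mem_PClass_of_deg_zero
    (n Ktil : ℕ) (hn : 1 ≤ n) (hK : 1 ≤ Ktil) (l s r : ℕ)
    (χ f : (Fin n → ℝ) × (Fin n → ℝ) → ℝ)
    (hχ : χ ∈ PClass n 0 (r * Ktil)) (hf : f ∈ PClass n l (s * Ktil)) :
    (∀ j : ℕ, 1 ≤ j → j ≤ l →
      ((fun g => poissonBracket g χ)^[j]) f ∈ PClass n (l - j) ((s + j * r) * Ktil)) ∧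
    (∀ j : ℕ, l < j → ((fun g => poissonBracket g χ)^[j]) f = 0) :=
  lieDeriv_iter_mem_PClass_of_deg_zero_general n Ktil l s r χ f hχ hf
end
end

section
/- Let n ≥ 1, k ∈ ℤ^n with k ≠ 0, δ > 0, ρ > 0, and ω* ∈ ℝ^n. Then the Lebesgue measure of the set {ω ∈ ℝ^n : ‖ω − ω*‖_∞ ≤ ρ and |k·ω| < δ} is at most (2ρ)^{n−1} · 2δ/‖k‖_∞, where ‖k‖_∞ = max_j |k_j|. -/
/-!
Slice along a coordinate `j` at which `|k_j| = ‖k‖_∞`. For fixed values `y` of the other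
coordinates, the condition `|k·ω| < δ` is `|k_j x + c(y)| < δ` in the remaining variable `x`,
an interval of length `2δ/‖k‖_∞`; and the condition `‖ω − ω*‖_∞ ≤ ρ` forces `y` into a cube of
side `2ρ` in dimension `n − 1`. Fubini multiplies the two bounds.
-/

open MeasureTheory

lemma volume_setOf_abs_mul_add_lt (a c δ : ℝ) (ha : a ≠ 0) :
    volume {x : ℝ | |a * x + c| < δ} = ENNReal.ofReal (2 * δ / |a|) := by
  have h : {x : ℝ | |a * x + c| < δ} = Metric.ball (-c / a) (δ / |a|) := by
    ext x
    rw [Set.mem_ofPred_eq, Metric.mem_ball, Real.dist_eq, lt_div_iff₀ (abs_pos.2 ha), ← abs_mul,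
      show (x - -c / a) * a = a * x + c by field_simp; ring]
  rw [h, Real.volume_ball, mul_div_assoc]

theorem Fin.sum_mul_insertNth {R : Type*} [NonUnitalNonAssocSemiring R] {m : ℕ}
    (f : Fin (m + 1) → R) (j : Fin (m + 1)) (x : R) (y : Fin m → R) :
    ∑ i, f i * (j.insertNth x y : Fin (m + 1) → R) i = f j * x + ∑ i, f (j.succAbove i) * y i := by
  simp [Fin.sum_univ_succAbove _ j]

theorem Fin.dist_removeNth_le {X : Type*} [PseudoMetricSpace X] {m : ℕ} (j : Fin (m + 1))
    (ω ω' : Fin (m + 1) → X) : dist (j.removeNth ω) (j.removeNth ω') ≤ dist ω ω' :=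
  (dist_pi_le_iff dist_nonneg).2 fun _ => dist_le_pi_dist ω ω' _

theorem volume_le_mul_of_fiber_le {α : Type*} [MeasureSpace α] [SigmaFinite (volume : Measure α)]
    {m : ℕ} (j : Fin (m + 1)) {S : Set (Fin (m + 1) → α)} (hS : MeasurableSet S)
    (Q : Set (Fin m → α)) (C : ENNReal) (hSQ : ∀ x y, j.insertNth x y ∈ S → y ∈ Q)
    (hfiber : ∀ y ∈ Q, volume {x | j.insertNth x y ∈ S} ≤ C) :
    volume S ≤ C * volume Q := by
  let e := MeasurableEquiv.piFinSuccAbove (fun _ : Fin (m + 1) => α) j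
  have he : MeasurePreserving e.symm volume volume :=
    (volume_preserving_piFinSuccAbove (fun _ : Fin (m + 1) => α) j).symm e
  have hfiber_indicator : ∀ y, volume {x | j.insertNth x y ∈ S} ≤ Q.indicator (fun _ => C) y := by
    intro y
    by_cases hy : y ∈ Q
    · simpa [hy] using hfiber y hy
    · have : {x | j.insertNth x y ∈ S} = ∅ :=
        Set.eq_empty_of_forall_notMem fun x hx => hy (hSQ x y hx)
      simp [this]
  calc volume S = volume (e.symm ⁻¹' S) := (he.measure_preimage hS.nullMeasurableSet).symm
    _ = ∫⁻ y, volume {x | j.insertNth x y ∈ S} := by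
      rw [Measure.volume_eq_prod, Measure.prod_apply_symm (e.symm.measurable hS)]
      rfl
    _ ≤ ∫⁻ y, Q.indicator (fun _ => C) y := lintegral_mono hfiber_indicator
    _ ≤ C * volume Q := lintegral_indicator_const_le Q C

theorem measure_resonant_slab_le_general
    (n : ℕ) (k : Fin n → ℤ) (hk : k ≠ 0)
    (δ ρ : ℝ) (hρ : 0 < ρ) (ωstar : Fin n → ℝ) :
    volume {ω : Fin n → ℝ | ‖ω - ωstar‖ ≤ ρ ∧ |∑ i, (k i : ℝ) * ω i| < δ}
      ≤ ENNReal.ofReal ((2 * ρ) ^ (n - 1) * (2 * δ / ‖(fun i => (k i : ℝ) : Fin n → ℝ)‖)) := by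
  set K : Fin n → ℝ := fun i => (k i : ℝ)
  obtain ⟨i₀, -⟩ := Function.ne_iff.1 hk
  obtain ⟨m, rfl⟩ := Nat.exists_eq_add_one_of_ne_zero i₀.pos.ne'
  obtain ⟨j, hj⟩ : ∃ j, |K j| = ‖K‖ := (IsGreatest.pi_norm K).1
  have hKj : K j ≠ 0 := by
    rw [← abs_ne_zero, hj, norm_ne_zero_iff]
    exact fun h => hk (funext fun i => by simpa [K] using congrFun h i)
  calc volume {ω : Fin (m + 1) → ℝ | ‖ω - ωstar‖ ≤ ρ ∧ |∑ i, K i * ω i| < δ}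
      ≤ ENNReal.ofReal (2 * δ / |K j|) * volume (Metric.closedBall (j.removeNth ωstar) ρ) := by
        refine volume_le_mul_of_fiber_le j (by measurability) _ _ (fun x y hxy => ?_)
          (fun y _ => ?_)
        · have := Fin.dist_removeNth_le j (Fin.insertNth (α := fun _ => ℝ) j x y) ωstar
          rw [Fin.removeNth_insertNth, dist_eq_norm] at this
          exact this.trans hxy.1
        · rw [← volume_setOf_abs_mul_add_lt _ (∑ i, K (j.succAbove i) * y i) δ hKj]
          refine measure_mono fun x hx => ?_
          simpa only [Set.mem_ofPred_eq, Fin.sum_mul_insertNth] using hx.2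
    _ = _ := by
      rw [Real.volume_pi_closedBall _ hρ.le, Fintype.card_fin, ← hj, mul_comm,
        ← ENNReal.ofReal_mul (by positivity), Nat.add_sub_cancel]

/-- For any nonzero `k ∈ ℤⁿ`, `δ > 0`, `ρ > 0` and `ω* ∈ ℝⁿ`, the
Lebesgue measure of the resonant slab
`{ω : ‖ω − ω*‖_∞ ≤ ρ and |k·ω| < δ}` is at most `(2ρ)^{n−1} · 2δ/‖k‖_∞`
(the norm on `Fin n → ℝ` is the sup-norm). -/
theorem measure_resonant_slab_le
    (n : ℕ) (hn : 1 ≤ n) (k : Fin n → ℤ) (hk : k ≠ 0)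
    (δ ρ : ℝ) (hδ : 0 < δ) (hρ : 0 < ρ) (ωstar : Fin n → ℝ) :
    volume {ω : Fin n → ℝ | ‖ω - ωstar‖ ≤ ρ ∧ |∑ i, (k i : ℝ) * ω i| < δ}
      ≤ ENNReal.ofReal ((2 * ρ) ^ (n - 1) * (2 * δ / ‖(fun i => (k i : ℝ) : Fin n → ℝ)‖)) :=
  measure_resonant_slab_le_general n k hk δ ρ hρ ωstar
end

section
/- Let ω* ∈ ℝ^4 be the vector with components ω*₁ = −0.0061397976714045992, ω*₂ = −0.0034842628951575595, ω*₃ = −0.0073217663368488322, ω*₄ = −0.0059275598828692194, and set ρ = 2×10⁻¹⁵, γ = 2.9200551117155624×10⁻¹⁷, τ = 4. Then the set of (γ,τ)-Diophantine vectors contained in the closed sup-norm ball S_ρ(ω*) = {ω ∈ ℝ^4 : ‖ω − ω*‖_∞ ≤ ρ}, namely {ω ∈ S_ρ(ω*) : |k·ω| ≥ γ/|k|₁^4 for all k ∈ ℤ^4 \ {0}}, has 4-dimensional Lebesgue measure at least 0.9 · (2ρ)^4, i.e., at least 90% of the volume of the ball S_ρ(ω*). -/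
open MeasureTheory

noncomputable section

/-- The angular velocity vector `ω*` of the quasi-periodic secular motion of υ-And b
targeted in the computer-assisted KAM proof (non-relativistic model). -/
def omegaStar : Fin 4 → ℝ :=
  ![-0.0061397976714045992, -0.0034842628951575595,
    -0.0073217663368488322, -0.0059275598828692194]

/-!
The ball `S_ρ(ω*)` has volume `(2ρ)⁴`, and a point of it fails to be Diophantine only through a
resonance `|k · ω| < γ / |k|₁⁴`. For `0 < |k|₁ ≤ 5` no point of the ball is resonant:
`|k · ω*| ≥ γ + 5ρ` is a finite check on the numerators of `ω*`, and moving inside the ball changes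
`k · ω` by at most `|k|₁ ρ`. For `|k|₁ = n ≥ 6` the resonant slab has width `2γ / n⁴` across the
coordinate of the largest `|kᵢ| ≥ n / 4`, so it meets the ball in volume at most `8γ(2ρ)³ / n⁵`.
There are at most `(16n³ + 48n² + 44n + 6) / 3` such `k`, so the shell `n` contributes at most
`(200/3) γ (2ρ)³ (1/(n-1) - 1/n)`, and the telescoping sum over `n ≥ 6` is `(40/3) γ (2ρ)³`, less
than a tenth of `(2ρ)⁴`.
-/

open Metric Finset

section Slab

variable {ι : Type*} [Fintype ι]

def slab (a : ι → ℝ) (ε : ℝ) : Set (ι → ℝ) :=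
  {ω | |∑ j, a j * ω j| < ε}

theorem abs_sum_mul_sub_sum_mul_le (a x y : ι → ℝ) :
    |∑ j, a j * x j - ∑ j, a j * y j| ≤ (∑ j, |a j|) * ‖x - y‖ := by
  rw [← Finset.sum_sub_distrib, Finset.sum_mul]
  refine (Finset.abs_sum_le_sum_abs _ _).trans (Finset.sum_le_sum fun j _ => ?_)
  rw [← mul_sub, abs_mul, ← Real.norm_eq_abs (x j - y j)]
  exact mul_le_mul_of_nonneg_left (norm_le_pi_norm (x - y) j) (abs_nonneg _)

variable [DecidableEq ι]

theorem Matrix.det_one_updateRow {R : Type*} [CommRing R] (i : ι) (a : ι → R) :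
    ((1 : Matrix ι ι R).updateRow i a).det = a i := by
  have ha : ∑ k, a k • (1 : Matrix ι ι R) k = a := by ext j; simp [Matrix.one_apply]
  simpa [ha] using Matrix.det_updateRow_sum (1 : Matrix ι ι R) i a

-- The linear map replacing the `i`-th coordinate by `a · ω` has determinant `a i` and maps the
-- set into a box whose `i`-th side is `(-ε, ε)`.
theorem volume_closedBall_inter_slab_le (c : ι → ℝ) {r : ℝ} (hr : 0 ≤ r) (a : ι → ℝ)
    {i : ι} (hi : a i ≠ 0) (ε : ℝ) :
    volume (closedBall c r ∩ slab a ε) ≤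
      ENNReal.ofReal (|a i|⁻¹ * (2 * ε) * (2 * r) ^ (Fintype.card ι - 1)) := by
  set f := Matrix.toLin' ((1 : Matrix ι ι ℝ).updateRow i a)
  set box := Set.univ.pi (Function.update (fun j => closedBall (c j) r) i (Set.Ioo (-ε) ε))
  have hdet : LinearMap.det f = a i := by rw [LinearMap.det_toLin', Matrix.det_one_updateRow]
  have hsub : closedBall c r ∩ slab a ε ⊆ f ⁻¹' box := by
    rintro ω ⟨hω, hslab⟩ j -
    rcases eq_or_ne j i with rfl | hj
    · simpa [f, slab, Matrix.mulVec, dotProduct, abs_lt] using hslab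
    · rw [closedBall_pi c hr] at hω
      simpa [f, hj, Matrix.mulVec, Matrix.one_apply, dotProduct] using hω j trivial
  have hbox : volume box = ENNReal.ofReal (2 * ε) * ENNReal.ofReal (2 * r) ^ (Fintype.card ι - 1) := by
    rw [volume_pi_pi, ← Finset.prod_erase_mul _ _ (Finset.mem_univ i), Function.update_self,
      Finset.prod_congr rfl fun j hj => by rw [Function.update_of_ne (Finset.ne_of_mem_erase hj)],
      mul_comm]
    simp [Real.volume_Ioo, Real.volume_closedBall, two_mul]
  calc volume (closedBall c r ∩ slab a ε) ≤ volume (f ⁻¹' box) := measure_mono hsub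
    _ = ENNReal.ofReal |(a i)⁻¹| *
          (ENNReal.ofReal (2 * ε) * ENNReal.ofReal (2 * r) ^ (Fintype.card ι - 1)) := by
        rw [Measure.addHaar_preimage_linearMap _ (hdet ▸ hi), hdet, hbox]
    _ = ENNReal.ofReal (|a i|⁻¹ * (2 * ε) * (2 * r) ^ (Fintype.card ι - 1)) := by
        rw [ENNReal.ofReal_mul' (pow_nonneg (by positivity) _),
          ENNReal.ofReal_mul (inv_nonneg.2 (abs_nonneg _)), ENNReal.ofReal_pow (by positivity),
          abs_inv, mul_assoc]

theorem volume_closedBall_inter_slab_le_of_ne_zero (c : ι → ℝ) {r : ℝ} (hr : 0 ≤ r)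
    {a : ι → ℝ} (ha : a ≠ 0) {ε : ℝ} (hε : 0 ≤ ε) :
    volume (closedBall c r ∩ slab a ε) ≤
      ENNReal.ofReal (2 * Fintype.card ι * ε / (∑ j, |a j|) * (2 * r) ^ (Fintype.card ι - 1)) := by
  obtain ⟨j, hj⟩ := Function.ne_iff.1 ha
  obtain ⟨i, -, hmax⟩ := Finset.exists_max_image univ (fun j => |a j|) ⟨j, mem_univ j⟩
  have hi : 0 < |a i| := (abs_pos.2 hj).trans_le (hmax j (mem_univ j))
  have hsum : ∑ j, |a j| ≤ Fintype.card ι * |a i| := by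
    simpa using Finset.sum_le_card_nsmul univ _ _ fun j _ => hmax j (mem_univ j)
  refine (volume_closedBall_inter_slab_le c hr a (abs_pos.1 hi) ε).trans
    (ENNReal.ofReal_le_ofReal (mul_le_mul_of_nonneg_right ?_ (by positivity)))
  rw [inv_mul_eq_div, div_le_div_iff₀ hi
    (hi.trans_le (single_le_sum (fun j _ => abs_nonneg (a j)) (mem_univ i)))]
  nlinarith

end Slab

theorem eq_of_abs_eq_of_nonneg_iff {α : Type*} [AddCommGroup α] [LinearOrder α]
    [IsOrderedAddMonoid α] {a b : α} (habs : |a| = |b|) (hsign : 0 ≤ a ↔ 0 ≤ b) : a = b := by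
  rcases lt_or_ge a 0 with ha | ha
  · have hb : b < 0 := not_le.1 (mt hsign.2 ha.not_ge)
    rwa [abs_of_neg ha, abs_of_neg hb, neg_inj] at habs
  · rwa [abs_of_nonneg ha, abs_of_nonneg (hsign.1 ha)] at habs

section L1Shells

variable {d n : ℕ} {k : Fin d → ℤ}

def l1Ball (d n : ℕ) : Finset (Fin d → ℤ) :=
  {k ∈ Fintype.piFinset fun _ => Finset.Icc (-n : ℤ) n | ∑ i, |k i| ≤ n}

def l1Sphere (d n : ℕ) : Finset (Fin d → ℤ) :=
  {k ∈ Fintype.piFinset fun _ => Finset.Icc (-n : ℤ) n | ∑ i, |k i| = n}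

theorem abs_le_sum_abs (k : Fin d → ℤ) (i : Fin d) : |k i| ≤ ∑ j, |k j| :=
  single_le_sum (fun j _ => abs_nonneg (k j)) (mem_univ i)

theorem mem_l1Ball : k ∈ l1Ball d n ↔ ∑ i, |k i| ≤ n := by
  refine ⟨fun h => (Finset.mem_filter.1 h).2, fun h => Finset.mem_filter.2 ⟨?_, h⟩⟩
  simpa [Fintype.mem_piFinset, ← abs_le] using fun i => (abs_le_sum_abs k i).trans h

theorem mem_l1Sphere : k ∈ l1Sphere d n ↔ ∑ i, |k i| = n := by
  refine ⟨fun h => (Finset.mem_filter.1 h).2, fun h => Finset.mem_filter.2 ⟨?_, h⟩⟩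
  simpa [Fintype.mem_piFinset, ← abs_le] using fun i => (abs_le_sum_abs k i).trans h.le

theorem card_l1Ball_le : #(l1Ball d n) ≤ (2 * n + 1) ^ d := by
  refine (card_filter_le _ _).trans_eq ?_
  simp only [Fintype.card_piFinset, Int.card_Icc, prod_const, card_univ, Fintype.card_fin]
  congr 1
  omega

-- A point of the sphere is determined by its first `d` coordinates and the sign of the last one.
theorem card_l1Sphere_succ_le : #(l1Sphere (d + 1) n) ≤ 2 * #(l1Ball d n) := by
  have hsum (k : Fin (d + 1) → ℤ) : ∑ i, |k i| = ∑ i, |Fin.init k i| + |k (Fin.last d)| :=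
    Fin.sum_univ_castSucc _
  calc #(l1Sphere (d + 1) n) ≤ #(l1Ball d n ×ˢ (univ : Finset Bool)) := by
        refine card_le_card_of_injOn (fun k => (Fin.init k, decide (0 ≤ k (Fin.last d)))) ?_ ?_
        · intro k hk
          simp only [coe_product, coe_univ, Set.mem_prod, Set.mem_univ, and_true, mem_coe,
            mem_l1Ball]
          have := abs_nonneg (k (Fin.last d))
          rw [mem_coe, mem_l1Sphere, hsum] at hk
          omega
        · intro k hk k' hk' hkk'
          rw [mem_coe, mem_l1Sphere, hsum] at hk hk'
          obtain ⟨hinit, hsign⟩ := Prod.mk.inj hkk'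
          rw [hinit] at hk
          rw [← Fin.snoc_init_self k, ← Fin.snoc_init_self k', hinit,
            eq_of_abs_eq_of_nonneg_iff (by omega) (decide_eq_decide.1 hsign)]
    _ = 2 * #(l1Ball d n) := by simp [mul_comm]

theorem l1Ball_succ_subset : l1Ball d (n + 1) ⊆ l1Ball d n ∪ l1Sphere d (n + 1) := by
  intro k hk
  rw [mem_union, mem_l1Ball, mem_l1Sphere]
  rw [mem_l1Ball] at hk
  push_cast at hk ⊢
  omega

theorem card_l1Ball_three_le (n : ℕ) :
    3 * #(l1Ball 3 n) ≤ 8 * n ^ 3 + 24 * n ^ 2 + 22 * n + 3 := by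
  induction n with
  | zero => simpa using card_l1Ball_le (d := 3) (n := 0)
  | succ n ih =>
    have hunion := (card_le_card l1Ball_succ_subset).trans
      (card_union_le (l1Ball 3 n) (l1Sphere 3 (n + 1)))
    have hsphere := (card_l1Sphere_succ_le (d := 2) (n := n + 1)).trans
      (Nat.mul_le_mul_left 2 card_l1Ball_le)
    nlinarith

theorem card_l1Sphere_four_le (n : ℕ) :
    3 * #(l1Sphere 4 n) ≤ 16 * n ^ 3 + 48 * n ^ 2 + 44 * n + 6 := by
  have hsphere : #(l1Sphere 4 n) ≤ 2 * #(l1Ball 3 n) := card_l1Sphere_succ_le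
  have hball := card_l1Ball_three_le n
  omega

end L1Shells

theorem card_l1Sphere_four_mul_le {n : ℕ} (hn : 6 ≤ n) :
    (#(l1Sphere 4 n) : ℝ) * 8 / n ^ 5 ≤ 200 / 3 * (1 / (n - 1) - 1 / n) := by
  have hcard : (3 : ℝ) * #(l1Sphere 4 n) ≤ 16 * n ^ 3 + 48 * n ^ 2 + 44 * n + 6 := by
    exact_mod_cast card_l1Sphere_four_le n
  have hn6 : (6 : ℝ) ≤ n := by exact_mod_cast hn
  have hn1 : (0 : ℝ) < (n - 1) * n := by nlinarith
  have hsub : 1 / ((n : ℝ) - 1) - 1 / n = 1 / ((n - 1) * n) := by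
    field_simp [(by linarith : (n : ℝ) - 1 ≠ 0)]
    ring
  have hpoly : 8 * (16 * n ^ 3 + 48 * n ^ 2 + 44 * n + 6) * ((n - 1) * n) ≤ (200 : ℝ) * n ^ 5 := by
    nlinarith [mul_nonneg (pow_nonneg (by linarith : (0 : ℝ) ≤ n) 4) (sub_nonneg.2 hn6),
      pow_nonneg (by linarith : (0 : ℝ) ≤ n) 3]
  rw [hsub, mul_one_div, div_le_div_iff₀ (by positivity) (by positivity)]
  nlinarith [mul_le_mul_of_nonneg_right hcard hn1.le]

theorem sum_volume_closedBall_inter_slab_le (c : Fin 4 → ℝ) {ρ γ : ℝ} (hρ : 0 ≤ ρ) (hγ : 0 ≤ γ)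
    {n : ℕ} (hn : 6 ≤ n) :
    ∑ k ∈ l1Sphere 4 n, volume (closedBall c ρ ∩ slab (Int.cast ∘ k) (γ / (n : ℝ) ^ 4)) ≤
      ENNReal.ofReal (200 / 3 * γ * (2 * ρ) ^ 3 * (1 / (n - 1) - 1 / n)) := by
  have hterm : ∀ k ∈ l1Sphere 4 n, volume (closedBall c ρ ∩ slab (Int.cast ∘ k) (γ / n ^ 4)) ≤
      ENNReal.ofReal (γ * (2 * ρ) ^ 3 * (8 / n ^ 5)) := by
    intro k hk
    have hsum : ∑ i, |(Int.cast ∘ k) i| = (n : ℝ) := by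
      simp only [Function.comp_apply]
      exact_mod_cast mem_l1Sphere.1 hk
    have hk0 : (Int.cast ∘ k : Fin 4 → ℝ) ≠ 0 := by
      intro h
      rw [funext fun i => Int.cast_eq_zero.1 (congrFun h i), mem_l1Sphere] at hk
      simp at hk
      omega
    refine (volume_closedBall_inter_slab_le_of_ne_zero c hρ hk0 (by positivity)).trans_eq ?_
    rw [hsum, Fintype.card_fin]
    congr 1
    field_simp
    ring
  calc ∑ k ∈ l1Sphere 4 n, volume (closedBall c ρ ∩ slab (Int.cast ∘ k) (γ / (n : ℝ) ^ 4))
      ≤ #(l1Sphere 4 n) • ENNReal.ofReal (γ * (2 * ρ) ^ 3 * (8 / n ^ 5)) :=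
        sum_le_card_nsmul _ _ _ hterm
    _ = ENNReal.ofReal (γ * (2 * ρ) ^ 3 * (#(l1Sphere 4 n) * 8 / n ^ 5)) := by
        rw [nsmul_eq_mul, ← ENNReal.ofReal_natCast, ← ENNReal.ofReal_mul (Nat.cast_nonneg _)]
        ring_nf
    _ ≤ ENNReal.ofReal (200 / 3 * γ * (2 * ρ) ^ 3 * (1 / (n - 1) - 1 / n)) := by
        refine ENNReal.ofReal_le_ofReal ?_
        have := mul_le_mul_of_nonneg_left (card_l1Sphere_four_mul_le hn)
          (by positivity : 0 ≤ γ * (2 * ρ) ^ 3)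
        linarith

theorem tsum_ofReal_sub_succ_le {f : ℕ → ℝ} (hf : Antitone f) (hf0 : ∀ n, 0 ≤ f n) :
    ∑' n, ENNReal.ofReal (f n - f (n + 1)) ≤ ENNReal.ofReal (f 0) := by
  refine ENNReal.tsum_le_of_sum_range_le fun N => ?_
  rw [← ENNReal.ofReal_sum_of_nonneg fun n _ => sub_nonneg.2 (hf n.le_succ), sum_range_sub']
  exact ENNReal.ofReal_le_ofReal (sub_le_self _ (hf0 N))

theorem volume_iUnion_closedBall_inter_slab_le (c : Fin 4 → ℝ) {ρ γ : ℝ} (hρ : 0 ≤ ρ)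
    (hγ : 0 ≤ γ) {N : ℕ} (hN : 6 ≤ N) :
    volume (⋃ m : ℕ, ⋃ k ∈ l1Sphere 4 (m + N),
      closedBall c ρ ∩ slab (Int.cast ∘ k) (γ / ((m + N : ℕ) : ℝ) ^ 4)) ≤
      ENNReal.ofReal (200 / 3 * γ * (2 * ρ) ^ 3 / (N - 1)) := by
  set C := 200 / 3 * γ * (2 * ρ) ^ 3
  have hC : 0 ≤ C := by positivity
  have hpos (m : ℕ) : (0 : ℝ) < m + N - 1 := by
    have : (6 : ℝ) ≤ N := by exact_mod_cast hN
    linarith [m.cast_nonneg (α := ℝ)]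
  calc _ ≤ ∑' m : ℕ, ∑ k ∈ l1Sphere 4 (m + N),
          volume (closedBall c ρ ∩ slab (Int.cast ∘ k) (γ / ((m + N : ℕ) : ℝ) ^ 4)) :=
        (measure_iUnion_le _).trans (ENNReal.tsum_le_tsum fun m => measure_biUnion_finset_le _ _)
    _ ≤ ∑' m : ℕ, ENNReal.ofReal (C / ((m : ℝ) + N - 1) - C / (((m + 1 : ℕ) : ℝ) + N - 1)) :=
        ENNReal.tsum_le_tsum fun m =>
          (sum_volume_closedBall_inter_slab_le c hρ hγ (by omega)).trans_eq
            (by congr 1; push_cast; ring)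
    _ ≤ ENNReal.ofReal (C / (((0 : ℕ) : ℝ) + N - 1)) :=
        tsum_ofReal_sub_succ_le (f := fun m : ℕ => C / ((m : ℝ) + N - 1))
          (fun a b hab => div_le_div_of_nonneg_left hC (hpos a) (by gcongr))
          (fun m => div_nonneg hC (hpos m).le)
    _ = ENNReal.ofReal (C / (N - 1)) := by simp

section Diophantine

variable {d : ℕ}

def diophantineSet (d : ℕ) (γ : ℝ) (τ : ℕ) : Set (Fin d → ℝ) :=
  {ω | ∀ k : Fin d → ℤ, k ≠ 0 → γ / ((∑ i, |k i| : ℤ) : ℝ) ^ τ ≤ |∑ i, (k i : ℝ) * ω i|}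

theorem closedBall_diff_diophantineSet_subset {c : Fin d → ℝ} {ρ γ : ℝ} {τ N : ℕ}
    (hsmall : ∀ k : Fin d → ℤ, k ≠ 0 → ∑ i, |k i| < N → ∀ ω ∈ closedBall c ρ,
      γ / ((∑ i, |k i| : ℤ) : ℝ) ^ τ ≤ |∑ i, (k i : ℝ) * ω i|) :
    closedBall c ρ \ diophantineSet d γ τ ⊆ ⋃ m : ℕ, ⋃ k ∈ l1Sphere d (m + N),
      closedBall c ρ ∩ slab (Int.cast ∘ k) (γ / ((m + N : ℕ) : ℝ) ^ τ) := by
  rintro ω ⟨hω, hdioph⟩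
  simp only [diophantineSet, Set.mem_ofPred_eq, not_forall, not_le] at hdioph
  obtain ⟨k, hk, hres⟩ := hdioph
  have hN : (N : ℤ) ≤ ∑ i, |k i| := not_lt.1 fun h => hres.not_ge (hsmall k hk h ω hω)
  obtain ⟨m, hm⟩ : ∃ m : ℕ, ∑ i, |k i| = ((m + N : ℕ) : ℤ) :=
    ⟨(∑ i, |k i|).toNat - N, by omega⟩
  rw [hm, Int.cast_natCast] at hres
  exact Set.mem_iUnion.2 ⟨m, Set.mem_iUnion₂.2 ⟨k, mem_l1Sphere.2 hm, hω, hres⟩⟩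

end Diophantine

theorem sum_mul_omegaStar (k : Fin 4 → ℤ) :
    ∑ i, (k i : ℝ) * omegaStar i =
      ((k 0 * -61397976714045992 + k 1 * -34842628951575595 + k 2 * -73217663368488322 +
        k 3 * -59275598828692194 : ℤ) : ℝ) / 10 ^ 19 := by
  simp only [Fin.sum_univ_four, omegaStar]
  push_cast
  norm_num
  ring

-- `10¹⁹ ω*` is an integer vector, and `10¹⁹ (γ + 5ρ) < 100293`.
theorem omegaStar_numerators_small_divisors :
    ∀ a ∈ Icc (-5 : ℤ) 5, ∀ b ∈ Icc (-5 : ℤ) 5, ∀ c ∈ Icc (-5 : ℤ) 5, ∀ d ∈ Icc (-5 : ℤ) 5,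
      |a| + |b| + |c| + |d| ≤ 5 → ¬(a = 0 ∧ b = 0 ∧ c = 0 ∧ d = 0) →
        100293 ≤ |a * -61397976714045992 + b * -34842628951575595 + c * -73217663368488322 +
          d * -59275598828692194| := by
  decide

theorem le_abs_sum_mul_omegaStar {k : Fin 4 → ℤ} (hk : k ≠ 0) (h5 : ∑ i, |k i| ≤ 5) :
    (2.9200551117155624e-17 : ℝ) + 5 * 2e-15 ≤ |∑ i, (k i : ℝ) * omegaStar i| := by
  have hbox (i : Fin 4) : k i ∈ Icc (-5 : ℤ) 5 :=
    mem_Icc.2 (abs_le.1 ((abs_le_sum_abs k i).trans h5))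
  have hne : ¬(k 0 = 0 ∧ k 1 = 0 ∧ k 2 = 0 ∧ k 3 = 0) := fun ⟨h0, h1, h2, h3⟩ =>
    hk (funext fun i => by fin_cases i <;> assumption)
  rw [Fin.sum_univ_four] at h5
  have hnum :=
    omegaStar_numerators_small_divisors _ (hbox 0) _ (hbox 1) _ (hbox 2) _ (hbox 3) h5 hne
  rw [sum_mul_omegaStar, abs_div, abs_of_pos (by norm_num : (0 : ℝ) < 10 ^ 19),
    le_div_iff₀ (by norm_num), ← Int.cast_abs]
  refine le_trans ?_ (Int.cast_le.2 hnum)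
  norm_num

theorem omegaStar_nonresonant_of_sum_abs_lt_six (k : Fin 4 → ℤ) (hk : k ≠ 0)
    (h6 : ∑ i, |k i| < 6) (ω : Fin 4 → ℝ) (hω : ω ∈ closedBall omegaStar 2e-15) :
    (2.9200551117155624e-17 : ℝ) / ((∑ i, |k i| : ℤ) : ℝ) ^ 4 ≤ |∑ i, (k i : ℝ) * ω i| := by
  obtain ⟨j, hj⟩ := Function.ne_iff.1 hk
  have hpos : (1 : ℝ) ≤ ((∑ i, |k i| : ℤ) : ℝ) := by
    exact_mod_cast (abs_pos.2 hj).trans_le (abs_le_sum_abs k j)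
  have hsum : ∑ i, |(k i : ℝ)| ≤ 5 := by exact_mod_cast (by omega : ∑ i, |k i| ≤ 5)
  have hdist := (abs_sum_mul_sub_sum_mul_le (fun i => (k i : ℝ)) ω omegaStar).trans
    (mul_le_mul hsum (mem_closedBall_iff_norm.1 hω) (norm_nonneg _) (by norm_num))
  have hfar := le_abs_sum_mul_omegaStar hk (by omega)
  calc (2.9200551117155624e-17 : ℝ) / ((∑ i, |k i| : ℤ) : ℝ) ^ 4 ≤ 2.9200551117155624e-17 :=
        div_le_self (by norm_num) (one_le_pow₀ hpos)
    _ ≤ |∑ i, (k i : ℝ) * ω i| := by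
        linarith [abs_sub_abs_le_abs_sub (∑ i, (k i : ℝ) * omegaStar i) (∑ i, (k i : ℝ) * ω i),
          abs_sub_comm (∑ i, (k i : ℝ) * ω i) (∑ i, (k i : ℝ) * omegaStar i)]

/-- With `ρ = 2×10⁻¹⁵`, `γ = 2.9200551117155624×10⁻¹⁷` and `τ = 4`, the
set of `(γ,τ)`-Diophantine vectors contained in the closed sup-norm ball of radius `ρ`
around `ω*` has 4-dimensional Lebesgue measure at least `0.9 · (2ρ)⁴`, i.e. at least 90%
of the volume of the ball. -/
theorem measure_diophantine_in_ball_ge :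
    volume {ω : Fin 4 → ℝ | ‖ω - omegaStar‖ ≤ 2e-15 ∧
        ∀ k : Fin 4 → ℤ, k ≠ 0 →
          (2.9200551117155624e-17 : ℝ) / ((∑ i, |k i| : ℤ) : ℝ) ^ (4 : ℕ)
            ≤ |∑ i, (k i : ℝ) * ω i|}
      ≥ ENNReal.ofReal (0.9 * (2 * 2e-15) ^ (4 : ℕ)) := by
  set B := closedBall omegaStar 2e-15
  set D := diophantineSet 4 2.9200551117155624e-17 4
  suffices h : ENNReal.ofReal (0.9 * (2 * 2e-15) ^ 4) ≤ volume (B ∩ D) by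
    convert h using 2
    ext ω
    simp [B, D, diophantineSet, dist_eq_norm]
  have hresonant : volume (B \ D) ≤
      ENNReal.ofReal (200 / 3 * 2.9200551117155624e-17 * (2 * 2e-15) ^ 3 / (6 - 1)) :=
    (measure_mono (closedBall_diff_diophantineSet_subset
      omegaStar_nonresonant_of_sum_abs_lt_six)).trans
      (volume_iUnion_closedBall_inter_slab_le omegaStar (by norm_num) (by norm_num) le_rfl)
  calc ENNReal.ofReal (0.9 * (2 * 2e-15) ^ 4)
      ≤ ENNReal.ofReal ((2 * 2e-15) ^ 4) -
          ENNReal.ofReal (200 / 3 * 2.9200551117155624e-17 * (2 * 2e-15) ^ 3 / (6 - 1)) := by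
        rw [← ENNReal.ofReal_sub _ (by norm_num)]
        exact ENNReal.ofReal_le_ofReal (by norm_num)
    _ ≤ volume B - volume (B \ D) := by
        rw [Real.volume_pi_closedBall _ (by norm_num), Fintype.card_fin]
        exact tsub_le_tsub_left hresonant _
    _ ≤ volume (B ∩ D) := tsub_le_iff_right.2 (measure_le_inter_add_sdiff _ _ _)
end
end
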